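/- arXiv:2512.19164 — 3 statements merged into one kernel-verified Lean document; each statement's English description precedes it below -/
import Mathlib

section
/- Let G be a group, N a normal subgroup of G with quotient A = G/N, and suppose there is a lift τ₁ : A → G (a set-theoretic section of the quotient map) whose image consists of pairwise commuting elements and such that the order of τ₁(a) in G equals the order of a in A for every a ∈ A. If A is a finite abelian group, then there exists a group homomorphism τ₂ : A → G that is a section of the quotient map; consequently G is the semidirect product N ⋊ τ₂(A). -/
/-- If `N ⊴ G` with `A = G/N` finite abelian, and there is a set-theoretic
section `τ₁ : A → G` of the quotient map whose image consists of pairwise commuting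
elements and which preserves element orders, then there is a group-homomorphism section
`τ₂ : A →* G`; consequently `G = N ⋊ τ₂(A)` (the range of `τ₂` is a complement to `N`). -/
theorem stmt0 {G : Type*} [Group G] (N : Subgroup G) [N.Normal]
    [Finite (G ⧸ N)] (habelian : ∀ a b : G ⧸ N, a * b = b * a)
    (τ₁ : G ⧸ N → G)
    (hsec : ∀ a : G ⧸ N, QuotientGroup.mk (τ₁ a) = a)
    (hcomm : ∀ a b : G ⧸ N, Commute (τ₁ a) (τ₁ b))
    (hord : ∀ a : G ⧸ N, orderOf (τ₁ a) = orderOf a) :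
    ∃ τ₂ : (G ⧸ N) →* G,
      (∀ a : G ⧸ N, QuotientGroup.mk (τ₂ a) = a) ∧
      Subgroup.IsComplement' N τ₂.range := by
  classical
  letI : CommGroup (G ⧸ N) := { mul_comm := habelian }
  obtain ⟨ι, _inst, n, hn, ⟨e⟩⟩ := CommGroup.equiv_prod_multiplicative_zmod_of_finite (G ⧸ N)
  set a : ι → G ⧸ N :=
    fun i => e.symm (Pi.mulSingle i (Multiplicative.ofAdd (1 : ZMod (n i)))) with ha
  set g : ι → G := fun i => τ₁ (a i) with hg
  have hga : ∀ i, QuotientGroup.mk (g i) = a i := fun i => hsec (a i)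
  have hordg : ∀ i, orderOf (g i) = n i := by
    intro i
    rw [hg, hord, ha, e.symm.orderOf_eq, orderOf_piMulSingle,
      orderOf_ofAdd_eq_addOrderOf, ZMod.addOrderOf_one]
  have hpow : ∀ i, (g i) ^ (n i) = 1 := fun i => by rw [← hordg i]; exact pow_orderOf_eq_one _
  let fadd : ∀ i, ZMod (n i) →+ Additive G := fun i =>
    ZMod.lift (n i) ⟨zmultiplesHom (Additive G) (Additive.ofMul (g i)), by
      show ((n i : ℤ)) • (Additive.ofMul (g i)) = 0
      apply Additive.toMul.injective
      simp only [toMul_zsmul, toMul_ofMul, toMul_zero, zpow_natCast, hpow i]⟩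
  let f : ∀ i, Multiplicative (ZMod (n i)) →* G := fun i =>
    AddMonoidHom.toMultiplicativeLeft (fadd i)
  have hf : ∀ i (x : ZMod (n i)), f i (Multiplicative.ofAdd x) = g i ^ x.val := by
    intro i x
    haveI : NeZero (n i) := ⟨by have := hn i; omega⟩
    have hx : ((x.val : ℤ) : ZMod (n i)) = x := by
      rw [Int.cast_natCast, ZMod.natCast_val, ZMod.cast_id]
    calc f i (Multiplicative.ofAdd x) = Additive.toMul (fadd i x) := rfl
      _ = Additive.toMul (fadd i ((x.val : ℤ) : ZMod (n i))) := by rw [hx]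
      _ = Additive.toMul ((x.val : ℤ) • Additive.ofMul (g i)) := by
          show Additive.toMul (ZMod.lift (n i) _ _) = _
          rw [ZMod.lift_coe]
          rfl
      _ = g i ^ (x.val : ℤ) := by simp
      _ = g i ^ x.val := by rw [zpow_natCast]
  have hfx : ∀ i (x : Multiplicative (ZMod (n i))),
      f i x = g i ^ (Multiplicative.toAdd x).val := fun i x => hf i (Multiplicative.toAdd x)
  have hcomm' : Pairwise fun i j => ∀ x y, Commute (f i x) (f j y) := by
    intro i j _ x y
    rw [hfx, hfx]
    exact (hcomm (a i) (a j)).pow_pow _ _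
  set τ₂ : (G ⧸ N) →* G := (MonoidHom.noncommPiCoprod f hcomm').comp e.toMonoidHom with hτ₂
  have hxpow : ∀ i (x : Multiplicative (ZMod (n i))),
      x = (Multiplicative.ofAdd (1 : ZMod (n i))) ^ (Multiplicative.toAdd x).val := by
    intro i x
    haveI : NeZero (n i) := ⟨by have := hn i; omega⟩
    have hxv : (((Multiplicative.toAdd x).val : ℕ) : ZMod (n i)) = Multiplicative.toAdd x := by
      rw [ZMod.natCast_val, ZMod.cast_id]
    calc x = Multiplicative.ofAdd (Multiplicative.toAdd x) := rfl
      _ = Multiplicative.ofAdd ((Multiplicative.toAdd x).val • (1 : ZMod (n i))) := by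
          rw [nsmul_eq_mul, mul_one, hxv]
      _ = (Multiplicative.ofAdd (1 : ZMod (n i))) ^ (Multiplicative.toAdd x).val :=
          ofAdd_nsmul _ _
  have hsec2 : ∀ b : G ⧸ N, QuotientGroup.mk (τ₂ b) = b := by
    have key : (QuotientGroup.mk' N).comp (MonoidHom.noncommPiCoprod f hcomm')
        = e.symm.toMonoidHom := by
      apply MonoidHom.functions_ext
      intro i x
      haveI : Fact (1 < n i) := ⟨hn i⟩
      rw [MonoidHom.comp_apply, MonoidHom.noncommPiCoprod_mulSingle, hfx i x,
        QuotientGroup.mk'_apply]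
      conv_rhs => rw [hxpow i x, ← MonoidHom.mulSingle_apply, map_pow, map_pow]
      rw [MonoidHom.mulSingle_apply]
      have : (QuotientGroup.mk (g i ^ (Multiplicative.toAdd x).val) : G ⧸ N)
          = (QuotientGroup.mk (g i) : G ⧸ N) ^ (Multiplicative.toAdd x).val := by
        rw [← QuotientGroup.mk'_apply, ← QuotientGroup.mk'_apply, map_pow]
      rw [this, hga i]
      rfl
    intro b
    have := DFunLike.congr_fun key (e b)
    simp only [MonoidHom.comp_apply, QuotientGroup.mk'_apply, MulEquiv.coe_toMonoidHom] at this
    rw [hτ₂]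
    simp only [MonoidHom.comp_apply, MulEquiv.coe_toMonoidHom]
    rw [this, MulEquiv.symm_apply_apply]
  refine ⟨τ₂, hsec2, ?_⟩
  rw [Subgroup.isComplement'_def, Subgroup.isComplement_iff_existsUnique]
  intro q
  refine ⟨⟨⟨q * (τ₂ (QuotientGroup.mk q))⁻¹, ?_⟩, ⟨τ₂ (QuotientGroup.mk q), ⟨_, rfl⟩⟩⟩, ?_, ?_⟩
  · simp only [SetLike.mem_coe]
    rw [← QuotientGroup.eq_one_iff]
    simp [hsec2]
  · simp
  · rintro ⟨⟨m, hm⟩, ⟨k, ⟨b, rfl⟩⟩⟩ hmk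
    simp only at hmk
    have hm' : m ∈ N := hm
    have hq : QuotientGroup.mk q = b := by
      rw [← hmk, QuotientGroup.mk_mul, hsec2, (QuotientGroup.eq_one_iff m).2 hm', one_mul]
    subst hq
    have h1 : m = q * (τ₂ (QuotientGroup.mk q))⁻¹ := eq_mul_inv_of_mul_eq hmk
    exact Prod.ext (Subtype.ext h1) (Subtype.ext rfl)
end

section
/- Let B be the braid group of a finite Coxeter group W with generators S̄, and suppose α, β ∈ W each admit a unique reduced expression, these reduced expressions differ in their first letter, and ℓ(β⁻¹α) = ℓ(β) + ℓ(α). If additionally β̃⁻¹ᾱ = α̃⁻¹β̄ holds in W in the sense that β⁻¹α = α⁻¹β, and a Coxeter-diagram automorphism exchanging the first letters of α and β fixes c := β⁻¹α, then the lifted relation β̃ ᾱ = α̃ β̄ holds in the braid group B (where x̃ denotes the image of x̄ under the palindromic anti-automorphism). -/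
/-!
Concatenating the reduced words of `β` (reversed) and `α` gives a word for `β⁻¹α` of length
`ℓ(β) + ℓ(α) = ℓ(β⁻¹α)`, so it is reduced; by `β⁻¹α = α⁻¹β` the same holds for the reversed word
of `α` followed by that of `β`. Two reduced words for the same element have equal products in the
braid group, and the palindromic anti-automorphism turns the lift of a reduced word into the
product of the reversed word, which is exactly the identity `β̃ ᾱ = α̃ β̄`.
-/

theorem map_one_of_antimul {B : Type*} [Group B] {φ : B → B}
    (hφ : ∀ x y : B, φ (x * y) = φ y * φ x) : φ 1 = 1 :=
  left_eq_mul.mp (by simpa only [mul_one] using hφ 1 1)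

theorem map_list_prod_of_antimul {B : Type*} [Group B] {φ : B → B}
    (hφ : ∀ x y : B, φ (x * y) = φ y * φ x) (l : List B) :
    φ l.prod = (l.map φ).reverse.prod := by
  induction l with
  | nil => simpa using map_one_of_antimul hφ
  | cons x l ih => simp [hφ, ih]

theorem map_prod_map_of_antimul {B S : Type*} [Group B] {φ : B → B} {gen : S → B}
    (hφ : ∀ x y : B, φ (x * y) = φ y * φ x) (hφgen : ∀ s : S, φ (gen s) = gen s)
    (ω : List S) : φ (ω.map gen).prod = (ω.reverse.map gen).prod := by
  rw [map_list_prod_of_antimul hφ, List.map_map, List.map_reverse]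
  exact congrArg (fun l ↦ (List.reverse l).prod) (List.map_congr_left fun s _ ↦ hφgen s)

namespace CoxeterSystem

variable {S W : Type*} [Group W] {M : CoxeterMatrix S} (cs : CoxeterSystem M W)

theorem isReduced_reverse_append {ω ω' : List S} (hω : cs.IsReduced ω) (hω' : cs.IsReduced ω')
    (hlen : cs.length ((cs.wordProd ω)⁻¹ * cs.wordProd ω') =
      cs.length (cs.wordProd ω) + cs.length (cs.wordProd ω')) :
    cs.IsReduced (ω.reverse ++ ω') := by
  rw [IsReduced, wordProd_append, wordProd_reverse, hlen, hω.eq, hω'.eq, List.length_append,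
    List.length_reverse]

end CoxeterSystem

theorem stmt10_general {B W S : Type*} [Group B] [Group W] {M : CoxeterMatrix S}
    (cs : CoxeterSystem M W) (gen : S → B) (lift : W → B)
    (hlift : ∀ (w : W) (ω : List S),
      cs.wordProd ω = w → cs.IsReduced ω → lift w = (ω.map gen).prod)
    (hbraid : ∀ (ω ω' : List S), cs.wordProd ω = cs.wordProd ω' →
      cs.IsReduced ω → cs.IsReduced ω' → (ω.map gen).prod = (ω'.map gen).prod)
    (φ : B → B) (hφ : ∀ x y : B, φ (x * y) = φ y * φ x)
    (hφgen : ∀ s : S, φ (gen s) = gen s)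
    (α β : W) (sα sβ : S) (ωα' ωβ' : List S)
    (hα : cs.wordProd (sα :: ωα') = α) (hαred : cs.IsReduced (sα :: ωα'))
    (hβ : cs.wordProd (sβ :: ωβ') = β) (hβred : cs.IsReduced (sβ :: ωβ'))
    (hlen : cs.length (β⁻¹ * α) = cs.length β + cs.length α)
    (hrel : β⁻¹ * α = α⁻¹ * β) :
    φ (lift β) * lift α = φ (lift α) * lift β := by
  rw [hlift α _ hα hαred, hlift β _ hβ hβred, map_prod_map_of_antimul hφ hφgen,
    map_prod_map_of_antimul hφ hφgen, ← List.prod_append, ← List.map_append,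
    ← List.prod_append, ← List.map_append]
  refine hbraid _ _ ?_ (cs.isReduced_reverse_append hβred hαred ?_)
    (cs.isReduced_reverse_append hαred hβred ?_)
  · simp only [cs.wordProd_append, cs.wordProd_reverse, hα, hβ, hrel]
  · rwa [hα, hβ]
  · rw [hα, hβ, ← hrel, hlen, add_comm]

/-- Let `(W,S)` be a finite Coxeter system, `B` its braid group with
generators `gen`, canonical lift `lift : W → B` via reduced expressions, and `φ` the
palindromic anti-automorphism of `B` fixing the generators. Suppose `α, β ∈ W` each admit
a unique reduced expression (`sα :: ωα'` resp. `sβ :: ωβ'`), these differ in their first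
letter, `ℓ(β⁻¹α) = ℓ(β) + ℓ(α)`, the relation `β⁻¹α = α⁻¹β` holds in `W`, and a diagram
automorphism exchanging the first letters fixes `c := β⁻¹α`. Then the lifted relation
`β̃ ᾱ = α̃ β̄` holds in the braid group, where `x̃ = φ(lift x)`. -/
theorem stmt10 {B W S : Type*} [Group B] [Group W] [Finite W] {M : CoxeterMatrix S}
    (cs : CoxeterSystem M W) (gen : S → B) (lift : W → B)
    (hlift : ∀ (w : W) (ω : List S),
      cs.wordProd ω = w → cs.IsReduced ω → lift w = (ω.map gen).prod)
    (hbraid : ∀ (ω ω' : List S), cs.wordProd ω = cs.wordProd ω' →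
      cs.IsReduced ω → cs.IsReduced ω' → (ω.map gen).prod = (ω'.map gen).prod)
    (φ : B → B) (hφ : ∀ x y : B, φ (x * y) = φ y * φ x)
    (hφgen : ∀ s : S, φ (gen s) = gen s)
    (α β : W) (sα sβ : S) (ωα' ωβ' : List S)
    (hα : cs.wordProd (sα :: ωα') = α) (hαred : cs.IsReduced (sα :: ωα'))
    (hαuniq : ∀ ω : List S, cs.wordProd ω = α → cs.IsReduced ω → ω = sα :: ωα')
    (hβ : cs.wordProd (sβ :: ωβ') = β) (hβred : cs.IsReduced (sβ :: ωβ'))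
    (hβuniq : ∀ ω : List S, cs.wordProd ω = β → cs.IsReduced ω → ω = sβ :: ωβ')
    (hheads : sα ≠ sβ)
    (hlen : cs.length (β⁻¹ * α) = cs.length β + cs.length α)
    (hrel : β⁻¹ * α = α⁻¹ * β)
    (πW : W ≃* W) (e : S ≃ S)
    (hπ : ∀ s : S, πW (cs.simple s) = cs.simple (e s))
    (he1 : e sα = sβ) (he2 : e sβ = sα)
    (hfix : πW (β⁻¹ * α) = β⁻¹ * α) :
    φ (lift β) * lift α = φ (lift α) * lift β :=
  stmt10_general cs gen lift hlift hbraid φ hφ hφgen α β sα sβ ωα' ωβ' hα hαred hβ hβred hlen hrel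
end

section
/- Let W be a finite Weyl group with root system Φ, positive roots Φ⁺ determined by simple roots Π, and let ρ∨ be the half-sum of positive coroots. Suppose there is an assignment σ from W into a group N equipped with a homomorphism-on-torus structure such that σ(s)² = α_s∨/2 for each simple reflection s (valued in Y ⊗ ℚ/ℤ for a lattice Y ⊇ ℤΦ∨) and σ respects reduced multiplication. Then for the longest element w₀, σ(w₀)² = ρ∨ in Y ⊗ ℚ/ℤ. -/
namespace Stmt18Aux

open CoxeterSystem List
open scoped Classical

variable {B W : Type*} [Group W] {M : CoxeterMatrix B} (cs : CoxeterSystem M W)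

local prefix:100 "s" => cs.simple
local prefix:100 "π" => cs.wordProd
local prefix:100 "ℓ" => cs.length

/-- The basic permutation of `W × ZMod 2` attached to a simple reflection. -/
noncomputable def eta (i : B) : Equiv.Perm (W × ZMod 2) :=
  Function.Involutive.toPerm
    (fun x => (s i * x.1 * s i, x.2 + if x.1 = s i then 1 else 0))
    (by
      rintro ⟨x, ε⟩
      have h1 : s i * (s i * x * s i) * s i = x := by
        simp [mul_assoc, cs.simple_mul_simple_self, cs.simple_mul_simple_cancel_left]
      have h2 : (s i * x * s i = s i) ↔ (x = s i) := by
        constructor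
        · intro h
          have := congrArg (fun y => s i * y * s i) h
          simpa [h1, mul_assoc, cs.simple_mul_simple_self] using this
        · rintro rfl; simp [mul_assoc, cs.simple_mul_simple_self]
      refine Prod.ext h1 ?_
      show ε + (if x = s i then 1 else 0) + (if s i * x * s i = s i then (1:ZMod 2) else 0) = ε
      rw [if_congr h2 rfl rfl]
      have h11 : (1 : ZMod 2) + 1 = 0 := rfl
      split
      · rw [add_assoc, h11, add_zero]
      · rw [add_assoc, add_zero, add_zero])

@[simp] lemma eta_apply (i : B) (x : W) (ε : ZMod 2) :
    eta cs i (x, ε) = (s i * x * s i, ε + if x = s i then 1 else 0) := rfl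

lemma conj_invol (i : B) (x : W) : s i * (s i * x * s i) * s i = x := by
  simp [mul_assoc, cs.simple_mul_simple_self, cs.simple_mul_simple_cancel_left]

lemma conj_eq_iff (i : B) (x y : W) : s i * x * s i = y ↔ x = s i * y * s i :=
  ⟨fun h => by rw [← h, conj_invol], fun h => by rw [h, conj_invol]⟩

lemma simple_swap_pow (i j : B) (r : ℕ) :
    s j * (s i * s j) ^ r = (s j * s i) ^ r * s j := by
  induction r with
  | zero => simp
  | succ r ih =>
    rw [pow_succ']
    calc s j * ((s i * s j) * (s i * s j) ^ r)
        = (s j * s i) * (s j * (s i * s j) ^ r) := by simp [mul_assoc]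
      _ = (s j * s i) * ((s j * s i) ^ r * s j) := by rw [ih]
      _ = (s j * s i) ^ (r + 1) * s j := by rw [pow_succ']; simp [mul_assoc]

lemma eta_liftable : M.IsLiftable (eta cs) := by
  intro i j
  set m := M i j with hm
  set p := s i * s j with hp
  set q := s j * s i with hq
  have hq_inv : ∀ k : ℕ, (q ^ k)⁻¹ = p ^ k := by
    intro k
    rw [← inv_pow]
    congr 1
    rw [hq, hp, mul_inv_rev, cs.inv_simple, cs.inv_simple]
  have hp_inv : ∀ k : ℕ, (p ^ k)⁻¹ = q ^ k := by
    intro k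
    rw [← inv_pow]
    congr 1
    rw [hq, hp, mul_inv_rev, cs.inv_simple, cs.inv_simple]
  have hsp : ∀ k : ℕ, (s j : W) * p ^ k = q ^ k * s j := by
    intro k; rw [hp, hq]; exact simple_swap_pow cs i j k
  -- the iteration formula
  have key : ∀ (k : ℕ) (x : W) (ε : ZMod 2),
      ((eta cs i * eta cs j) ^ k) (x, ε) =
        (p ^ k * x * q ^ k,
          ε + ∑ r ∈ Finset.range (2 * k), (if x = q ^ r * s j then 1 else 0)) := by
    intro k
    induction k with
    | zero => intro x ε; simp
    | succ k ih =>
      intro x ε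
      rw [pow_succ']
      have step : ∀ y : W × ZMod 2, (eta cs i * eta cs j) y =
          (p * y.1 * q, y.2 + ((if y.1 = s j then 1 else 0)
            + (if y.1 = q * s j then 1 else 0))) := by
        rintro ⟨z, δ⟩
        show eta cs i (eta cs j (z, δ)) = _
        rw [eta_apply, eta_apply]
        refine Prod.ext ?_ ?_
        · show s i * (s j * z * s j) * s i = p * z * q
          rw [hp, hq]; group
        · show δ + (if z = s j then 1 else 0) + _ = _
          have h2 : (s j * z * s j = s i) ↔ (z = q * s j) := by
            rw [conj_eq_iff, hq, mul_assoc]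
          rw [if_congr h2 rfl rfl, add_assoc]
      rw [Equiv.Perm.mul_apply, ih x ε, step]
      simp only
      refine Prod.ext ?_ ?_
      · show p * (p ^ k * x * q ^ k) * q = p ^ (k+1) * x * q ^ (k+1)
        rw [pow_succ, pow_succ']; group
      · show _ + _ = ε + ∑ r ∈ Finset.range (2 * (k+1)), (if x = q ^ r * s j then 1 else 0)
        have hx : ∀ y : W, (p ^ k * x * q ^ k = y) ↔ (x = q ^ k * y * p ^ k) := by
          intro y
          constructor
          · intro h
            rw [← h, ← hp_inv, ← hq_inv]; group
          · intro h
            rw [h, ← hp_inv, ← hq_inv]; group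
        have e1 : (p ^ k * x * q ^ k = s j) ↔ (x = q ^ (2*k) * s j) := by
          rw [hx, mul_assoc, hsp, two_mul, pow_add, mul_assoc]
        have e2 : (p ^ k * x * q ^ k = q * s j) ↔ (x = q ^ (2*k+1) * s j) := by
          have h1 : q ^ k * (q * s j) * p ^ k = q ^ k * q * (s j * p ^ k) := by
            simp [mul_assoc]
          have h2 : k + 1 + k = 2 * k + 1 := by omega
          rw [hx, h1, hsp, ← mul_assoc, ← pow_succ, ← pow_add, h2]
        rw [if_congr e1 rfl rfl, if_congr e2 rfl rfl]
        have h2k : 2 * (k + 1) = (2 * k) + 1 + 1 := by ring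
        rw [h2k, Finset.sum_range_succ, Finset.sum_range_succ, add_assoc, add_assoc]
  -- now evaluate at k = m
  show (eta cs i * eta cs j) ^ m = 1
  have hpm : p ^ m = 1 := cs.simple_mul_simple_pow i j
  have hqm : q ^ m = 1 := cs.simple_mul_simple_pow' i j
  ext1 y
  obtain ⟨x, ε⟩ := y
  rw [key m x ε]
  have hsum : ∑ r ∈ Finset.range (2 * m), (if x = q ^ r * s j then (1:ZMod 2) else 0) = 0 := by
    rw [two_mul, Finset.sum_range_add]
    have hper : ∀ r, (if x = q ^ (m + r) * s j then (1:ZMod 2) else 0)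
        = (if x = q ^ r * s j then 1 else 0) := by
      intro r
      rw [pow_add, hqm, one_mul]
    simp only [hper]
    have hcc : ∀ c : ZMod 2, c + c = 0 := by decide
    rw [← Finset.sum_add_distrib]
    simp only [hcc, Finset.sum_const_zero]
  rw [hsum, hpm, hqm, add_zero, one_mul, mul_one]
  rfl

/-- The Eriksson permutation representation of `W` on `W × ZMod 2`. -/
noncomputable def phi : W →* Equiv.Perm (W × ZMod 2) :=
  cs.lift ⟨eta cs, eta_liftable cs⟩

@[simp] lemma phi_simple (i : B) : phi cs (s i) = eta cs i :=
  cs.lift_apply_simple (eta_liftable cs) i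

/-- The parity cocycle. -/
noncomputable def gfun (w x : W) : ZMod 2 := (phi cs w (x, 0)).2

/-- Structure of the permutation `phi w`. -/
lemma phi_apply (w : W) : ∀ (x : W) (ε : ZMod 2),
    phi cs w (x, ε) = (w * x * w⁻¹, ε + gfun cs w x) := by
  induction w using cs.simple_induction with
  | simple i =>
    intro x ε
    have hg : gfun cs (s i) x = if x = s i then 1 else 0 := by
      unfold gfun
      rw [phi_simple, eta_apply, zero_add]
    rw [phi_simple, eta_apply, cs.inv_simple, hg]
  | one =>
    intro x ε
    have hg : gfun cs (1 : W) x = 0 := by unfold gfun; simp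
    rw [hg]; simp
  | mul w w' hw hw' =>
    intro x ε
    have hg : gfun cs (w * w') x = gfun cs w' x + gfun cs w (w' * x * w'⁻¹) := by
      show (phi cs (w * w') (x, 0)).2 = _
      rw [map_mul, Equiv.Perm.mul_apply, hw' x 0, hw (w' * x * w'⁻¹) (0 + gfun cs w' x)]
      show 0 + gfun cs w' x + gfun cs w (w' * x * w'⁻¹) = _
      rw [zero_add]
    rw [map_mul, Equiv.Perm.mul_apply, hw' x ε, hw (w' * x * w'⁻¹) (ε + gfun cs w' x), hg]
    refine Prod.ext ?_ ?_
    · show w * (w' * x * w'⁻¹) * w⁻¹ = (w * w') * x * (w * w')⁻¹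
      rw [mul_inv_rev]; group
    · show ε + gfun cs w' x + gfun cs w (w' * x * w'⁻¹) = _
      abel

lemma gfun_eq (w x : W) : gfun cs w x = (phi cs w (x, 0)).2 := rfl

lemma gfun_simple (i : B) (x : W) : gfun cs (s i) x = if x = s i then 1 else 0 := by
  unfold gfun; rw [phi_simple, eta_apply, zero_add]

lemma gfun_mul (w w' x : W) : gfun cs (w * w') x = gfun cs w' x + gfun cs w (w' * x * w'⁻¹) := by
  have h1 := phi_apply cs (w * w') x 0
  have h2 : phi cs (w * w') (x, 0) = phi cs w (phi cs w' (x, 0)) := by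
    rw [map_mul, Equiv.Perm.mul_apply]
  rw [phi_apply cs w' x 0, phi_apply cs w] at h2
  rw [h1] at h2
  have h3 := congrArg Prod.snd h2
  simp only at h3
  rw [zero_add, zero_add] at h3
  exact h3

/-- The parity invariant counts occurrences in the left inversion sequence. -/
lemma phi_count (ω : List B) (x : W) :
    gfun cs (π ω)⁻¹ x = ((cs.leftInvSeq ω).count x : ZMod 2) := by
  induction ω generalizing x with
  | nil => simp [gfun]
  | cons i ω ih =>
    have hlis : cs.leftInvSeq (i :: ω) = s i :: List.map (MulAut.conj (s i)) (cs.leftInvSeq ω) :=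
      rfl
    have hinv : (π (i :: ω))⁻¹ = (π ω)⁻¹ * s i := by
      rw [cs.wordProd_cons, mul_inv_rev, cs.inv_simple]
    rw [hinv, gfun_mul, gfun_simple, cs.inv_simple, ih (s i * x * s i), hlis, List.count_cons]
    have hcount : (List.map (⇑(MulAut.conj (s i))) (cs.leftInvSeq ω)).count x
        = (cs.leftInvSeq ω).count (s i * x * s i) := by
      have hx : x = MulAut.conj (s i) (s i * x * s i) := by
        rw [MulAut.conj_apply, cs.inv_simple, conj_invol]
      conv_lhs => rw [hx]
      rw [List.count_map_of_injective _ _ (MulAut.conj (s i)).injective]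
    rw [hcount]
    have hif2 : (if s i = x then (1:ZMod 2) else 0) = if x = s i then 1 else 0 := by
      rcases eq_or_ne x (s i) with h | h
      · simp [h]
      · simp [h, h.symm]
    rw [Nat.cast_add, apply_ite (Nat.cast : ℕ → ZMod 2), Nat.cast_one, Nat.cast_zero]
    simp only [beq_iff_eq]
    rw [hif2, add_comm]

lemma gfun_one_elt (x : W) : gfun cs 1 x = 0 := by
  unfold gfun; simp

lemma zmod2_cases (c : ZMod 2) : c = 0 ∨ c = 1 := by
  fin_cases c
  · exact Or.inl rfl
  · exact Or.inr rfl

lemma isLeftInversion_of_gfun {w t : W} (hrefl : cs.IsReflection t)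
    (h : gfun cs w⁻¹ t = 1) : cs.IsLeftInversion w t := by
  obtain ⟨ω, hred, rfl⟩ := cs.exists_reduced_word' w
  rw [phi_count] at h
  have hmem : t ∈ cs.leftInvSeq ω := by
    by_contra hmem
    rw [List.count_eq_zero.mpr hmem] at h
    exact absurd h (by decide)
  exact cs.isLeftInversion_of_mem_leftInvSeq hred hmem

lemma gfun_refl_self {t : W} (hrefl : cs.IsReflection t) : gfun cs t t = 1 := by
  obtain ⟨u, i, rfl⟩ := hrefl
  have e1 : u * s i * u⁻¹ = (u * s i) * u⁻¹ := by group
  have e2 : u⁻¹ * (u * s i * u⁻¹) * u⁻¹⁻¹ = s i := by group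
  have e3 : (s i : W) * s i * (s i)⁻¹ = s i := by group
  have e4 : u⁻¹ * (u * s i * u⁻¹) * u⁻¹⁻¹ = s i := by group
  have hcancel : gfun cs u⁻¹ (u * s i * u⁻¹) + gfun cs u (s i) = 0 := by
    have := gfun_mul cs u u⁻¹ (u * s i * u⁻¹)
    rw [mul_inv_cancel, gfun_one_elt, e4] at this
    exact this.symm
  rw [e1, gfun_mul, e2, gfun_mul, e3, gfun_simple, if_pos rfl, ← e1]
  calc gfun cs u⁻¹ (u * s i * u⁻¹) + (1 + gfun cs u (s i))
      = gfun cs u⁻¹ (u * s i * u⁻¹) + gfun cs u (s i) + 1 := by abel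
    _ = 1 := by rw [hcancel, zero_add]

lemma gfun_of_isLeftInversion {w t : W} (h : cs.IsLeftInversion w t) :
    gfun cs w⁻¹ t = 1 := by
  obtain ⟨hrefl, hlen⟩ := h
  have htt : t * t = 1 := hrefl.mul_self
  have hw : w⁻¹ = (t * w)⁻¹ * t := by group
  have e1 : t * t * t⁻¹ = t := by group
  rw [hw, gfun_mul, e1, gfun_refl_self cs hrefl]
  have h0 : gfun cs (t * w)⁻¹ t = 0 := by
    rcases zmod2_cases (gfun cs (t * w)⁻¹ t) with h0 | h1
    · exact h0
    · exfalso
      have := (isLeftInversion_of_gfun cs hrefl h1).2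
      rw [← mul_assoc, htt, one_mul] at this
      omega
  rw [h0, add_zero]

lemma gfun_inversion_iff {w t : W} (hrefl : cs.IsReflection t) :
    gfun cs w⁻¹ t = 1 ↔ cs.IsLeftInversion w t :=
  ⟨isLeftInversion_of_gfun cs hrefl, gfun_of_isLeftInversion cs⟩

/-- An element of a Coxeter group is determined by its set of left inversions. -/
lemma eq_of_inversions_eq :
    ∀ (n : ℕ) (u w : W), cs.length u = n →
      (∀ t : W, cs.IsReflection t → (cs.IsLeftInversion u t ↔ cs.IsLeftInversion w t)) →
      u = w := by
  intro n
  induction n using Nat.strong_induction_on with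
  | _ n IH =>
    intro u w hlen hiff
    rcases eq_or_ne u 1 with rfl | hu
    · rcases eq_or_ne w 1 with rfl | hw
      · rfl
      · exfalso
        obtain ⟨i, hi⟩ := cs.exists_leftDescent_of_ne_one hw
        have h1 : cs.IsLeftInversion w (s i) :=
          (cs.isLeftInversion_simple_iff_isLeftDescent w i).mpr hi
        have h2 : cs.IsLeftInversion 1 (s i) := (hiff _ (cs.isReflection_simple i)).mpr h1
        have := h2.2
        simp at this
    · obtain ⟨i, hi⟩ := cs.exists_leftDescent_of_ne_one hu
      have hwi : cs.IsLeftDescent w i := by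
        have h1 : cs.IsLeftInversion u (s i) :=
          (cs.isLeftInversion_simple_iff_isLeftDescent u i).mpr hi
        exact (cs.isLeftInversion_simple_iff_isLeftDescent w i).mp
          ((hiff _ (cs.isReflection_simple i)).mp h1)
      set u' := s i * u with hu'
      set w' := s i * w with hw'
      -- the cocycle relation transported to the shortened elements
      have hgfun : ∀ (v v' : W), v' = s i * v → ∀ x : W,
          gfun cs v'⁻¹ x = (if x = s i then 1 else 0) + gfun cs v⁻¹ (s i * x * s i) := by
        intro v v' hv x
        have hvinv : v⁻¹ = v'⁻¹ * s i := by
          rw [hv, mul_inv_rev, cs.inv_simple, mul_assoc, cs.simple_mul_simple_self, mul_one]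
        have := gfun_mul cs v'⁻¹ (s i) (s i * x * s i)
        rw [← hvinv, gfun_simple, cs.inv_simple, conj_invol] at this
        have hcond : (s i * x * s i = s i) ↔ (x = s i) := by
          have h3 : (s i : W) * s i * s i = s i := by
            rw [cs.simple_mul_simple_self, one_mul]
          rw [conj_eq_iff, h3]
        rw [if_congr hcond rfl rfl] at this
        -- this : gfun cs v⁻¹ (s i * x * s i) = (if x = s i then 1 else 0) + gfun cs v'⁻¹ x
        rcases eq_or_ne x (s i) with h | h
        · rw [if_pos h] at this ⊢
          rw [this]
          have hab : (1 : ZMod 2) + (1 + gfun cs v'⁻¹ x) = gfun cs v'⁻¹ x + (1 + 1) := by abel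
          have h11 : (1 : ZMod 2) + 1 = 0 := rfl
          rw [hab, h11, add_zero]
        · rw [if_neg h] at this ⊢
          rw [zero_add] at this ⊢
          exact this.symm
      have hiff' : ∀ t : W, cs.IsReflection t →
          (cs.IsLeftInversion u' t ↔ cs.IsLeftInversion w' t) := by
        intro t ht
        have hconjrefl : cs.IsReflection (s i * t * s i) := by
          have := ht.conj (s i)
          rwa [cs.inv_simple] at this
        have hval : gfun cs u⁻¹ (s i * t * s i) = gfun cs w⁻¹ (s i * t * s i) := by
          rcases zmod2_cases (gfun cs u⁻¹ (s i * t * s i)) with h0 | h1 <;>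
            rcases zmod2_cases (gfun cs w⁻¹ (s i * t * s i)) with g0 | g1
          · rw [h0, g0]
          · exfalso
            have hw1 := (gfun_inversion_iff cs hconjrefl).mp g1
            have hu1 := (gfun_inversion_iff cs hconjrefl).mpr ((hiff _ hconjrefl).mpr hw1)
            rw [h0] at hu1
            exact absurd hu1 (by decide)
          · exfalso
            have hu1 := (gfun_inversion_iff cs hconjrefl).mp h1
            have hw1 := (gfun_inversion_iff cs hconjrefl).mpr ((hiff _ hconjrefl).mp hu1)
            rw [g0] at hw1
            exact absurd hw1 (by decide)
          · rw [h1, g1]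
        have hval' : gfun cs u'⁻¹ t = gfun cs w'⁻¹ t := by
          rw [hgfun u u' hu' t, hgfun w w' hw' t, hval]
        rw [← gfun_inversion_iff cs ht, ← gfun_inversion_iff cs ht, hval']
      have hlt : cs.length u' < n := by rw [← hlen]; exact hi
      have heq := IH (cs.length u') hlt u' w' rfl hiff'
      rw [hu', hw'] at heq
      exact mul_left_cancel heq

/-- The longest element of a Coxeter group is an involution. -/
lemma longest_inv_eq {w0 : W} (hw0 : ∀ w : W, cs.length w ≤ cs.length w0) : w0⁻¹ = w0 := by
  apply eq_of_inversions_eq cs (cs.length w0⁻¹) _ _ rfl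
  intro t ht
  have h1 : cs.IsLeftInversion w0 t := by
    refine ⟨ht, ?_⟩
    have hne := ht.length_mul_right_ne w0
    have hle := hw0 (t * w0)
    omega
  have h2 : cs.IsLeftInversion w0⁻¹ t := by
    refine ⟨ht, ?_⟩
    have hne := ht.length_mul_right_ne w0⁻¹
    have hle := hw0 (t * w0⁻¹)
    rw [cs.length_inv] at *
    omega
  exact iff_of_true h2 h1

end Stmt18Aux

section Part2

open Stmt18Aux

variable {W S N V : Type*} [Group W] [Group N] [AddCommGroup V] [Module ℚ V]
  {M : CoxeterMatrix S} (cs : CoxeterSystem M W)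

lemma t_zero (t : V → N) (ht : ∀ u v : V, t (u + v) = t u * t v) : t 0 = 1 := by
  have h := ht 0 0
  rw [add_zero] at h
  have := mul_right_cancel (a := t 0) (b := t 0) (c := 1)
  apply mul_left_cancel (a := t 0)
  rw [← h, mul_one]

lemma sigma_conj (ract : W →* (V ≃ₗ[ℚ] V)) (t : V → N)
    (σ : W → N) (hσ1 : σ 1 = 1)
    (hσmul : ∀ w w' : W, cs.length (w * w') = cs.length w + cs.length w' →
      σ (w * w') = σ w * σ w')
    (hconj : ∀ (s : S) (v : V),
      σ (cs.simple s) * t v * (σ (cs.simple s))⁻¹ = t (ract (cs.simple s) v)) :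
    ∀ (n : ℕ) (w : W), cs.length w = n → ∀ v : V, σ w * t v * (σ w)⁻¹ = t (ract w v) := by
  intro n
  induction n using Nat.strong_induction_on with
  | _ n IH =>
    intro w hlen v
    rcases eq_or_ne w 1 with rfl | hw
    · simp [hσ1]
    · obtain ⟨i, hi⟩ := cs.exists_leftDescent_of_ne_one hw
      set w' := cs.simple i * w with hw'
      have hw2 : w = cs.simple i * w' := by
        rw [hw', ← mul_assoc, cs.simple_mul_simple_self, one_mul]
      have hlen' : cs.length w' < n := hlen ▸ hi
      have hadd : cs.length (cs.simple i * w') =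
          cs.length (cs.simple i) + cs.length w' := by
        rw [← hw2, cs.length_simple]
        have h1 := (cs.isLeftDescent_iff (w := w) (i := i)).mp hi
        have : cs.length (cs.simple i * w) = cs.length w' := rfl
        omega
      have hIH := IH (cs.length w') hlen' w' rfl v
      rw [hw2, hσmul _ _ hadd]
      calc σ (cs.simple i) * σ w' * t v * (σ (cs.simple i) * σ w')⁻¹
          = σ (cs.simple i) * (σ w' * t v * (σ w')⁻¹) * (σ (cs.simple i))⁻¹ := by group
        _ = σ (cs.simple i) * t (ract w' v) * (σ (cs.simple i))⁻¹ := by rw [hIH]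
        _ = t (ract (cs.simple i) (ract w' v)) := hconj i _
        _ = t (ract (cs.simple i * w') v) := by
            have hmm : ract (cs.simple i * w') = ract (cs.simple i) * ract w' :=
              map_mul ract _ _
            rw [hmm]
            rfl

lemma sigma_key (ract : W →* (V ≃ₗ[ℚ] V)) (coroot : S → V) (ρ : V)
    (hρ : ∀ s : S, ract (cs.simple s) ρ = ρ - coroot s)
    (t : V → N) (ht : ∀ u v : V, t (u + v) = t u * t v)
    (σ : W → N) (hσ1 : σ 1 = 1)
    (hσmul : ∀ w w' : W, cs.length (w * w') = cs.length w + cs.length w' →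
      σ (w * w') = σ w * σ w')
    (hσs2 : ∀ s : S, σ (cs.simple s) ^ 2 = t ((2:ℚ)⁻¹ • coroot s))
    (hconj : ∀ (s : S) (v : V),
      σ (cs.simple s) * t v * (σ (cs.simple s))⁻¹ = t (ract (cs.simple s) v)) :
    ∀ (n : ℕ) (w : W), cs.length w = n →
      σ w⁻¹ * σ w = t ((2:ℚ)⁻¹ • (ρ - ract w⁻¹ ρ)) := by
  intro n
  induction n using Nat.strong_induction_on with
  | _ n IH =>
    intro w hlen
    rcases eq_or_ne w 1 with rfl | hw
    · rw [inv_one, hσ1, mul_one, map_one]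
      have : ((2:ℚ)⁻¹ • (ρ - (1 : V ≃ₗ[ℚ] V) ρ)) = 0 := by
        simp
      rw [this, t_zero t ht]
    · obtain ⟨i, hi⟩ := cs.exists_leftDescent_of_ne_one hw
      set w' := cs.simple i * w with hw'
      have hw2 : w = cs.simple i * w' := by
        rw [hw', ← mul_assoc, cs.simple_mul_simple_self, one_mul]
      have hlen' : cs.length w' < n := hlen ▸ hi
      have hlenw : cs.length w = cs.length w' + 1 := by
        have h1 := (cs.isLeftDescent_iff (w := w) (i := i)).mp hi
        have : cs.length (cs.simple i * w) = cs.length w' := rfl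
        omega
      have hadd : cs.length (cs.simple i * w') =
          cs.length (cs.simple i) + cs.length w' := by
        rw [← hw2, cs.length_simple]; omega
      have hadd2 : cs.length (w'⁻¹ * cs.simple i) =
          cs.length w'⁻¹ + cs.length (cs.simple i) := by
        have h1 : (w'⁻¹ * cs.simple i)⁻¹ = cs.simple i * w' := by
          rw [mul_inv_rev, inv_inv, cs.inv_simple]
        have h2 : cs.length (w'⁻¹ * cs.simple i) = cs.length (cs.simple i * w') := by
          rw [← cs.length_inv (w'⁻¹ * cs.simple i), h1]
        rw [h2, ← hw2, cs.length_simple, cs.length_inv]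
        omega
      have hinv2 : w⁻¹ = w'⁻¹ * cs.simple i := by
        rw [hw2, mul_inv_rev, cs.inv_simple]
      have hIH := IH (cs.length w') hlen' w' rfl
      have hconjgen := sigma_conj cs ract t σ hσ1 hσmul hconj (cs.length w'⁻¹) w'⁻¹ rfl
      calc σ w⁻¹ * σ w
          = σ (w'⁻¹ * cs.simple i) * σ (cs.simple i * w') := by rw [hinv2, ← hw2]
        _ = σ w'⁻¹ * σ (cs.simple i) * (σ (cs.simple i) * σ w') := by
            rw [hσmul _ _ hadd2, hσmul _ _ hadd]
        _ = σ w'⁻¹ * (σ (cs.simple i) ^ 2) * σ w' := by rw [pow_two]; group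
        _ = σ w'⁻¹ * t ((2:ℚ)⁻¹ • coroot i) * σ w' := by rw [hσs2]
        _ = (σ w'⁻¹ * t ((2:ℚ)⁻¹ • coroot i) * (σ w'⁻¹)⁻¹) * (σ w'⁻¹ * σ w') := by group
        _ = t (ract w'⁻¹ ((2:ℚ)⁻¹ • coroot i)) * t ((2:ℚ)⁻¹ • (ρ - ract w'⁻¹ ρ)) := by
            rw [hconjgen, hIH]
        _ = t (ract w'⁻¹ ((2:ℚ)⁻¹ • coroot i) + (2:ℚ)⁻¹ • (ρ - ract w'⁻¹ ρ)) := by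
            rw [ht]
        _ = t ((2:ℚ)⁻¹ • (ρ - ract w⁻¹ ρ)) := by
            congr 1
            have hr : ract w⁻¹ ρ = ract w'⁻¹ ρ - ract w'⁻¹ (coroot i) := by
              rw [hinv2, map_mul]
              have : ract (w'⁻¹ * cs.simple i) ρ = ract w'⁻¹ (ract (cs.simple i) ρ) := by
                rw [map_mul]; rfl
              rw [← map_mul, this, hρ i, map_sub]
            rw [hr, map_smul]
            module

end Part2

/-- Let `(W,S)` be a finite Weyl group, `V = Y ⊗ ℚ` a rational vector space
on which `W` acts (via `ract`), `coroot s ∈ V` the simple coroots, and `ρ∨ ∈ V` the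
half-sum of positive coroots, characterized by `s(ρ∨) = ρ∨ - α_s∨` for all simple `s`.
Let `N` be a group containing the torus `T = Y ⊗ ℚ/ℤ` via the additive-to-multiplicative
map `t : V → N` (whose kernel is the lattice `Y`), compatible with the `W`-action by
conjugation, and let `σ : W → N` be a Tits-type section: `σ(ww') = σ(w)σ(w')` whenever
lengths add, and `σ(s)² = t(α_s∨/2)` for `s ∈ S`. Then for the longest element `w₀`
(which satisfies `w₀(ρ∨) = -ρ∨`), one has `σ(w₀)² = ρ∨` in `Y ⊗ ℚ/ℤ`, i.e.
`σ(w₀)² = t(ρ∨)`. -/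
theorem stmt18 {W S N V : Type*} [Group W] [Finite W] [Group N]
    [AddCommGroup V] [Module ℚ V]
    {M : CoxeterMatrix S} (cs : CoxeterSystem M W)
    (ract : W →* (V ≃ₗ[ℚ] V)) (coroot : S → V) (ρ : V)
    (hρ : ∀ s : S, ract (cs.simple s) ρ = ρ - coroot s)
    (t : V → N) (ht : ∀ u v : V, t (u + v) = t u * t v)
    (σ : W → N) (hσ1 : σ 1 = 1)
    (hσmul : ∀ w w' : W, cs.length (w * w') = cs.length w + cs.length w' →
      σ (w * w') = σ w * σ w')
    (hσs2 : ∀ s : S, σ (cs.simple s) ^ 2 = t ((2:ℚ)⁻¹ • coroot s))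
    (hconj : ∀ (s : S) (v : V),
      σ (cs.simple s) * t v * (σ (cs.simple s))⁻¹ = t (ract (cs.simple s) v))
    (w0 : W) (hw0 : ∀ w : W, cs.length w ≤ cs.length w0)
    (hw0ρ : ract w0 ρ = -ρ) :
    σ w0 ^ 2 = t ρ := by
  have hinv : w0⁻¹ = w0 := Stmt18Aux.longest_inv_eq cs hw0
  have hkey := sigma_key cs ract coroot ρ hρ t ht σ hσ1 hσmul hσs2 hconj
    (cs.length w0) w0 rfl
  rw [hinv, hw0ρ] at hkey
  rw [pow_two, hkey]
  congr 1
  rw [sub_neg_eq_add]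
  rw [← two_smul ℚ ρ, smul_smul]
  norm_num
end
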